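/- Let f be represented by the LPB a·x_1 + a·x_2 + ... + a·x_l + a_{l+1}·x_{l+1} + ... + a_m·x_m ≥ d, and for each 0 ≤ k ≤ l let f_k(y) = f(e_k, y) with e_k having exactly k true entries among the first l. Suppose for each k, the set of valid degrees for representing f_k with left-hand side Σ_{i>l} a_i·x_i is the interval (s_k, b_k]. Then the set of valid degrees for representing f with the left-hand side a·x_1 + ... + a·x_l + Σ_{i>l} a_i·x_i is (s, b] where s = max_k (s_k + k·a) and b = min_k (b_k + k·a). -/

import Mathlib

/-!
The assignments of the first `l` variables are sorted by their number `k` of true entries.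
On such a fibre the symmetric part contributes exactly `k·a`, so `L ≥ d` represents `f` there
iff `d - k·a` is a valid degree for `f_k`, i.e. iff `d ∈ (s_k + k·a, b_k + k·a]`. A degree is
valid for `f` iff it is valid on every fibre, and the intersection of these intervals is
`(max_k (s_k + k·a), min_k (b_k + k·a)]`.
-/

open Finset

namespace EReal

lemma lt_coe_sub_iff_add_lt {s : EReal} {x c : ℝ} :
    s < ((x - c : ℝ) : EReal) ↔ s + c < x := by
  rw [coe_sub, EReal.lt_sub_iff_add_lt (.inl (coe_ne_bot c)) (.inl (coe_ne_top c))]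

lemma coe_sub_le_iff_le_add {t : EReal} {x c : ℝ} :
    ((x - c : ℝ) : EReal) ≤ t ↔ (x : EReal) ≤ t + c := by
  rw [coe_sub, sub_le_iff_le_add (.inl (coe_ne_bot c)) (.inl (coe_ne_top c))]

end EReal

lemma forall_iff_forall_range_forall_eq {α β : Type*} {κ : α → ℕ} {l : ℕ}
    (hκ : ∀ x, κ x ≤ l) {P : α → β → Prop} :
    (∀ x y, P x y) ↔ ∀ k ∈ range (l + 1), ∀ x y, κ x = k → P x y :=
  ⟨fun h _ _ x y _ => h x y, fun h x y => h (κ x) (mem_range_succ_iff.2 (hκ x)) x y rfl⟩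

lemma card_filter_eq_true_le {l : ℕ} (e : Fin l → Bool) : #{i | e i = true} ≤ l :=
  (card_filter_le _ _).trans_eq (card_fin l)

theorem stmt_14_general (l r : ℕ) (a : ℝ) (b : Fin r → ℝ)
    (f : (Fin l → Bool) → (Fin r → Bool) → Bool)
    (s B : ℕ → EReal)
    (hk : ∀ k ≤ l, ∀ d' : ℝ,
      (∀ (e : Fin l → Bool) (y : Fin r → Bool),
          (Finset.univ.filter (fun i => e i = true)).card = k →
          (f e y = true ↔ d' ≤ ∑ j, (if y j then b j else 0))) ↔
        (s k < (d' : EReal) ∧ (d' : EReal) ≤ B k)) :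
    ∀ d : ℝ,
      (∀ (e : Fin l → Bool) (y : Fin r → Bool),
          f e y = true ↔
            d ≤ a * (Finset.univ.filter (fun i => e i = true)).card +
                  ∑ j, (if y j then b j else 0)) ↔
        ((Finset.range (l + 1)).sup' Finset.nonempty_range_add_one
            (fun k => s k + ((k * a : ℝ) : EReal)) < (d : EReal) ∧
          (d : EReal) ≤ (Finset.range (l + 1)).inf' Finset.nonempty_range_add_one
            (fun k => B k + ((k * a : ℝ) : EReal))) := by
  intro d
  have fibre : ∀ k ≤ l,
      (∀ (e : Fin l → Bool) (y : Fin r → Bool), #{i | e i = true} = k →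
          (f e y = true ↔ d ≤ a * #{i | e i = true} + ∑ j, (if y j then b j else 0))) ↔
        (s k + ((k * a : ℝ) : EReal) < d ∧ (d : EReal) ≤ B k + ((k * a : ℝ) : EReal)) := by
    intro k hkl
    rw [← EReal.lt_coe_sub_iff_add_lt, ← EReal.coe_sub_le_iff_le_add, ← hk k hkl]
    refine forall₂_congr fun e y => forall_congr' fun he => ?_
    rw [he, sub_le_iff_le_add', mul_comm]
  rw [sup'_lt_iff, le_inf'_iff, ← forall₂_and,
    forall_iff_forall_range_forall_eq card_filter_eq_true_le]
  exact forall₂_congr fun k hk => fibre k (mem_range_succ_iff.1 hk)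

/-- Maintaining minimum and maximum degrees when splitting away `l` symmetric
variables with common coefficient `a`: the interval of valid degrees for `f`
is `(max_k (s_k + k·a), min_k (b_k + k·a)]`. -/
theorem stmt_14 (l r : ℕ) (a : ℝ) (ha : 0 ≤ a) (b : Fin r → ℝ) (hb : ∀ j, 0 ≤ b j)
    (f : (Fin l → Bool) → (Fin r → Bool) → Bool)
    (s B : ℕ → EReal)
    (hne : ∀ k ≤ l, s k < B k)
    (hk : ∀ k ≤ l, ∀ d' : ℝ,
      (∀ (e : Fin l → Bool) (y : Fin r → Bool),
          (Finset.univ.filter (fun i => e i = true)).card = k →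
          (f e y = true ↔ d' ≤ ∑ j, (if y j then b j else 0))) ↔
        (s k < (d' : EReal) ∧ (d' : EReal) ≤ B k)) :
    ∀ d : ℝ,
      (∀ (e : Fin l → Bool) (y : Fin r → Bool),
          f e y = true ↔
            d ≤ a * (Finset.univ.filter (fun i => e i = true)).card +
                  ∑ j, (if y j then b j else 0)) ↔
        ((Finset.range (l + 1)).sup' Finset.nonempty_range_add_one
            (fun k => s k + ((k * a : ℝ) : EReal)) < (d : EReal) ∧
          (d : EReal) ≤ (Finset.range (l + 1)).inf' Finset.nonempty_range_add_one
            (fun k => B k + ((k * a : ℝ) : EReal))) :=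
  stmt_14_general l r a b f s B hk
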